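/- Let 1 ≤ p < +∞ and let g belong to the little Bloch space 𝓑₀. Then for every analytic function f on 𝔻 with ρ_{p,∞}(f) < ∞, the function T_g f belongs to RM(p,0). -/

import Mathlib

open MeasureTheory Metric Set Filter
open scoped ENNReal

/-- The point `r e^{iθ}` of the complex plane. -/
noncomputable def circ (r θ : ℝ) : ℂ := r * Complex.exp (θ * Complex.I)

/-- `ρ_{p,∞}(h) = sup_θ (∫₀¹ |h(re^{iθ})|^p dr)^{1/p}` (with values in `ℝ≥0∞`). -/
noncomputable def rhoInf (p : ℝ) (h : ℂ → ℂ) : ℝ≥0∞ :=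
  ⨆ θ : ℝ, (∫⁻ r in Ioc (0:ℝ) 1, ENNReal.ofReal (‖h (circ r θ)‖ ^ p)) ^ (1/p)

/-- `f` belongs to `RM(p,0)`: `f` is analytic on the unit disc and
`lim_{ρ→1⁻} sup_θ (∫_ρ¹ |f(re^{iθ})|^p dr)^{1/p} = 0`. -/
def memRMp0 (p : ℝ) (f : ℂ → ℂ) : Prop :=
  DifferentiableOn ℂ f (ball (0:ℂ) 1) ∧
    Tendsto (fun ρ : ℝ => ⨆ θ : ℝ,
        (∫⁻ r in Ioc ρ 1, ENNReal.ofReal (‖f (circ r θ)‖ ^ p)) ^ (1/p))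
      (nhdsWithin 1 (Iio (1:ℝ))) (nhds 0)

/-- The integration operator `T_g f(z) = ∫₀^z f(w) g'(w) dw` (integral along the
segment from `0` to `z`). -/
noncomputable def Tg (g f : ℂ → ℂ) (z : ℂ) : ℂ :=
  z * ∫ t in (0:ℝ)..1, f ((t : ℂ) * z) * deriv g ((t : ℂ) * z)

/-- `g` belongs to the little Bloch space: `(1-|z|²)|g'(z)| → 0` as `|z| → 1⁻`. -/
def littleBloch (g : ℂ → ℂ) : Prop :=
  Tendsto (fun z : ℂ => (1 - ‖z‖ ^ 2) * ‖deriv g z‖)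
    (Filter.comap (fun z : ℂ => ‖z‖) (nhdsWithin 1 (Iio (1:ℝ)))) (nhds 0)

/-!
`T_g f` is holomorphic because it equals `P(z) - P(0)` for a primitive `P` of `f g'` on the disc.

For the growth condition, fix `ε > 0`. The little Bloch condition gives `a < 1` with
`(1 - |z|) |g'(z)| ≤ ε` for `a < |z| < 1`, and `|f g'| ≤ C` on the closed disc of radius `a`.
Integrating along the ray, for `a < r < 1`,
`|T_g f(re^{iθ})| ≤ a C + ε ∫_a^r |f(te^{iθ})| / (1 - t) dt`.
Minkowski's inequality and the dual Hardy inequality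
`‖∫_a^r φ(t) / (1 - t) dt‖_{L^p(a,1)} ≤ p ‖φ‖_{L^p(a,1)}` bound the `L^p(ρ, 1)` norm of `T_g f`
along every ray by `a C (1 - ρ)^{1/p} + ε p ρ_{p,∞}(f)`. The first term tends to `0` as
`ρ → 1⁻` and `ε` is arbitrary.
-/

open scoped Topology

theorem ENNReal.tendsto_nhds_zero_of_forall_le_mul_add {α : Type*} {l : Filter α}
    {S u : α → ℝ≥0∞} {K : ℝ≥0∞} (hu : Tendsto u l (𝓝 0)) (hK : K ≠ ⊤)
    (h : ∀ ε : ℝ, 0 < ε → ∃ c ≠ ⊤, ∀ᶠ x in l, S x ≤ c * u x + ENNReal.ofReal ε * K) :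
    Tendsto S l (𝓝 0) := by
  rw [ENNReal.tendsto_nhds_zero]
  intro δ hδ
  have hsmall : Tendsto (fun ε => ENNReal.ofReal ε * K) (𝓝[>] 0) (𝓝 0) := by
    simpa using (ENNReal.Tendsto.mul_const (ENNReal.tendsto_ofReal tendsto_id)
      (Or.inr hK)).mono_left (nhdsWithin_le_nhds (a := (0:ℝ)) (s := Ioi 0))
  obtain ⟨ε, hεK, hε⟩ := ((hsmall.eventually (eventually_le_nhds (ENNReal.half_pos hδ.ne'))).and
    self_mem_nhdsWithin).exists
  obtain ⟨c, hc, hS⟩ := h ε hε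
  have hcu : Tendsto (fun x => c * u x) l (𝓝 0) := by
    simpa using ENNReal.Tendsto.const_mul hu (Or.inr hc)
  filter_upwards [hS, hcu.eventually (eventually_le_nhds (ENNReal.half_pos hδ.ne'))] with x hSx hcx
  calc S x ≤ δ / 2 + δ / 2 := hSx.trans (add_le_add hcx hεK)
    _ = δ := ENNReal.add_halves δ

theorem tendsto_ofReal_one_sub_rpow_nhdsLT {s : ℝ} (hs : 0 < s) :
    Tendsto (fun ρ : ℝ => ENNReal.ofReal (1 - ρ) ^ s) (𝓝[<] 1) (𝓝 0) := by
  have hcont : Continuous fun ρ : ℝ => ENNReal.ofReal (1 - ρ) ^ s :=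
    ENNReal.continuous_rpow_const.comp (ENNReal.continuous_ofReal.comp (by fun_prop))
  have := (hcont.tendsto 1).mono_left (nhdsWithin_le_nhds (s := Iio 1))
  rwa [sub_self, ENNReal.ofReal_zero, ENNReal.zero_rpow_of_pos hs] at this

theorem mul_intervalIntegral_comp_ofReal_mul_eq_sub {F P : ℂ → ℂ} {R : ℝ}
    (hF : ContinuousOn F (ball 0 R)) (hP : ∀ z ∈ ball (0 : ℂ) R, HasDerivAt P (F z) z)
    {z : ℂ} (hz : z ∈ ball 0 R) :
    z * ∫ t in (0:ℝ)..1, F (t * z) = P z - P 0 := by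
  have hseg : ∀ t ∈ uIcc (0:ℝ) 1, (t : ℂ) * z ∈ ball (0 : ℂ) R := by
    intro t ht
    rw [uIcc_of_le zero_le_one] at ht
    rw [mem_ball_zero_iff, norm_mul, Complex.norm_real, Real.norm_of_nonneg ht.1]
    exact (mul_le_of_le_one_left (norm_nonneg z) ht.2).trans_lt (mem_ball_zero_iff.1 hz)
  have hderiv : ∀ t ∈ uIcc (0:ℝ) 1,
      HasDerivAt (fun s : ℝ => P (s * z)) (F (t * z) * z) t := fun t ht =>
    ((hP _ (hseg t ht)).comp (t : ℂ) (hasDerivAt_mul_const z)).comp_ofReal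
  have hint : IntervalIntegrable (fun t : ℝ => F (t * z) * z) volume 0 1 :=
    ((hF.comp (by fun_prop) hseg).mul continuousOn_const).intervalIntegrable
  rw [mul_comm, ← intervalIntegral.integral_mul_const,
    intervalIntegral.integral_eq_sub_of_hasDerivAt hderiv hint]
  simp

theorem differentiableOn_mul_intervalIntegral_comp_ofReal_mul {F : ℂ → ℂ} {R : ℝ}
    (hF : DifferentiableOn ℂ F (ball 0 R)) :
    DifferentiableOn ℂ (fun z => z * ∫ t in (0:ℝ)..1, F (t * z)) (ball 0 R) := by
  obtain ⟨P, hP⟩ := hF.isExactOn_ball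
  have hPd : DifferentiableOn ℂ (fun z => P z - P 0) (ball 0 R) := fun z hz =>
    ((hP z hz).differentiableAt.sub_const _).differentiableWithinAt
  exact hPd.congr fun z hz => mul_intervalIntegral_comp_ofReal_mul_eq_sub hF.continuousOn hP hz

theorem integral_one_sub_rpow {a b s : ℝ} (hab : a ≤ b) (hs : -1 < s ∨ (s ≠ -1 ∧ b < 1)) :
    ∫ r in a..b, (1 - r) ^ s = ((1 - a) ^ (s + 1) - (1 - b) ^ (s + 1)) / (s + 1) := by
  rw [intervalIntegral.integral_comp_sub_left (fun x => x ^ s), integral_rpow]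
  refine hs.imp_right fun h => ⟨h.1, ?_⟩
  rw [uIcc_of_le (by linarith)]
  exact fun h0 => by linarith [h0.1, h.2]

theorem intervalIntegrable_one_sub_rpow {a b s : ℝ} (hab : a ≤ b)
    (hs : -1 < s ∨ b < 1) : IntervalIntegrable (fun r => (1 - r) ^ s) volume a b := by
  have : IntervalIntegrable (fun x : ℝ => x ^ s) volume (1 - b) (1 - a) := by
    rcases hs with hs | hb
    · exact intervalIntegral.intervalIntegrable_rpow' hs
    · refine intervalIntegral.intervalIntegrable_rpow (Or.inr ?_)
      rw [uIcc_of_le (by linarith)]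
      exact fun h0 => by linarith [h0.1]
  simpa using (this.comp_sub_left 1).symm

theorem lintegral_Ioo_ofReal_one_sub_rpow {a b s : ℝ} (hab : a ≤ b) (hb : b ≤ 1)
    (hs : -1 < s ∨ (s ≠ -1 ∧ b < 1)) :
    ∫⁻ r in Ioo a b, ENNReal.ofReal (1 - r) ^ s =
      ENNReal.ofReal (((1 - a) ^ (s + 1) - (1 - b) ^ (s + 1)) / (s + 1)) := by
  have hint := intervalIntegrable_one_sub_rpow hab (hs.imp_right And.right)
  rw [← integral_one_sub_rpow hab hs, intervalIntegral.integral_of_le hab,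
    integral_Ioc_eq_integral_Ioo,
    ofReal_integral_eq_lintegral_ofReal ((hint.1).mono_set Ioo_subset_Ioc_self)]
  · refine setLIntegral_congr_fun measurableSet_Ioo fun r hr => ?_
    exact ENNReal.ofReal_rpow_of_pos (by linarith [hr.2])
  · filter_upwards [ae_restrict_mem measurableSet_Ioo] with r hr
    exact Real.rpow_nonneg (by linarith [hr.2]) _

theorem lintegral_Ico_ofReal_one_sub_rpow_le {γ : ℝ} (hγ : 0 < γ) (t : ℝ) :
    ∫⁻ r in Ico t 1, ENNReal.ofReal (1 - r) ^ (γ - 1) ≤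
      ENNReal.ofReal γ⁻¹ * ENNReal.ofReal (1 - t) ^ γ := by
  rcases lt_or_ge t 1 with ht | ht
  · rw [← setLIntegral_congr Ioo_ae_eq_Ico,
      lintegral_Ioo_ofReal_one_sub_rpow ht.le le_rfl (Or.inl (by linarith))]
    simp only [sub_add_cancel, sub_self, Real.zero_rpow hγ.ne', sub_zero]
    rw [div_eq_inv_mul, ENNReal.ofReal_mul (inv_nonneg.2 hγ.le),
      ENNReal.ofReal_rpow_of_pos (by linarith)]
  · simp [Ico_eq_empty_of_le ht]

theorem lintegral_Ioc_ofReal_one_sub_rpow_le {γ : ℝ} (hγ : 0 < γ) (a : ℝ) {r : ℝ} (hr : r < 1) :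
    ∫⁻ t in Ioc a r, ENNReal.ofReal (1 - t) ^ (-(1 + γ)) ≤
      ENNReal.ofReal γ⁻¹ * ENNReal.ofReal (1 - r) ^ (-γ) := by
  rcases lt_or_ge a r with har | har
  · rw [← setLIntegral_congr Ioo_ae_eq_Ioc,
      lintegral_Ioo_ofReal_one_sub_rpow har.le hr.le (Or.inr ⟨by linarith, hr⟩),
      ENNReal.ofReal_rpow_of_pos (by linarith : 0 < 1 - r),
      ← ENNReal.ofReal_mul (inv_nonneg.2 hγ.le)]
    apply ENNReal.ofReal_le_ofReal
    rw [show -(1 + γ) + 1 = -γ by ring, div_neg, ← neg_div, neg_sub, div_eq_inv_mul]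
    gcongr
    linarith [Real.rpow_nonneg (by linarith : (0:ℝ) ≤ 1 - a) (-γ)]
  · simp [Ioc_eq_empty_of_le har]

theorem lintegral_Ioo_mul_lintegral_Ioc_eq {ψ v : ℝ → ℝ≥0∞} {a b : ℝ}
    (hψ : AEMeasurable ψ (volume.restrict (Ioo a b))) (hv : Measurable v) :
    ∫⁻ r in Ioo a b, v r * ∫⁻ t in Ioc a r, ψ t = ∫⁻ t in Ioo a b, ψ t * ∫⁻ r in Ico t b, v r := by
  have hinner : ∀ r ∈ Ioo a b, v r * ∫⁻ t in Ioc a r, ψ t =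
      ∫⁻ t in Ioo a b, v r * (Iic r).indicator ψ t := by
    intro r hr
    rw [lintegral_const_mul'' _ (hψ.indicator measurableSet_Iic),
      lintegral_indicator measurableSet_Iic, Measure.restrict_restrict measurableSet_Iic,
      show Iic r ∩ Ioo a b = Ioc a r by ext; simp; grind]
  have hswap : ∀ t ∈ Ioo a b, ∫⁻ r in Ioo a b, v r * (Iic r).indicator ψ t =
      ψ t * ∫⁻ r in Ico t b, v r := by
    intro t ht
    have hind : ∀ r, v r * (Iic r).indicator ψ t = ψ t * (Ici t).indicator v r := by
      intro r
      by_cases htr : t ≤ r <;> simp [indicator, htr, mul_comm]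
    simp_rw [hind]
    rw [lintegral_const_mul _ (hv.indicator measurableSet_Ici),
      lintegral_indicator measurableSet_Ici,
      Measure.restrict_restrict measurableSet_Ici,
      show Ici t ∩ Ioo a b = Ico t b by ext; simp; grind]
  have hmeas : AEMeasurable (Function.uncurry fun r t => v r * (Iic r).indicator ψ t)
      ((volume.restrict (Ioo a b)).prod (volume.restrict (Ioo a b))) := by
    have : (Function.uncurry fun r t => v r * (Iic r).indicator ψ t) =
        fun q => v q.1 * {q : ℝ × ℝ | q.2 ≤ q.1}.indicator (fun q => ψ q.2) q := by
      ext ⟨r, t⟩; by_cases h : t ≤ r <;> simp [indicator, h]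
    rw [this]
    exact (hv.comp measurable_fst).aemeasurable.mul
      (hψ.comp_snd.indicator (measurableSet_le measurable_snd measurable_fst))
  rw [setLIntegral_congr_fun measurableSet_Ioo hinner, lintegral_lintegral_swap hmeas,
    setLIntegral_congr_fun measurableSet_Ioo hswap]

/-- The Schur test behind Hardy's inequality: Hölder's inequality applied to the splitting
`φ / (1 - t) = φ (1 - t) ^ (-1 / p²) · (1 - t) ^ (1 / p² - 1)`. -/
theorem lintegral_div_one_sub_rpow_le {p : ℝ} (hp : 1 ≤ p) {φ : ℝ → ℝ≥0∞} {a r : ℝ}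
    (hφ : AEMeasurable φ (volume.restrict (Ioc a r))) (hr : r < 1) :
    (∫⁻ t in Ioc a r, φ t / ENNReal.ofReal (1 - t)) ^ p ≤
      ENNReal.ofReal p ^ (p - 1) * ENNReal.ofReal (1 - r) ^ (1 / p - 1) *
        ∫⁻ t in Ioc a r, φ t ^ p * ENNReal.ofReal (1 - t) ^ (-(1 / p)) := by
  rcases hp.eq_or_lt with rfl | hp1
  · simp [div_eq_mul_inv, ENNReal.rpow_neg_one]
  have hp0 : 0 < p := by linarith
  have hw : ∀ t ∈ Ioc a r, ENNReal.ofReal (1 - t) ≠ 0 := fun t ht => by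
    simpa using ht.2.trans_lt hr
  set q := p / (p - 1)
  have hpq : p.HolderConjugate q := .conjExponent hp1
  have hwm : ∀ s : ℝ, Measurable fun t : ℝ => ENNReal.ofReal (1 - t) ^ s := fun s => by fun_prop
  have hsplit : ∫⁻ t in Ioc a r, φ t / ENNReal.ofReal (1 - t) =
      ∫⁻ t in Ioc a r, (φ t * ENNReal.ofReal (1 - t) ^ (-(1 / p ^ 2))) *
        ENNReal.ofReal (1 - t) ^ (1 / p ^ 2 - 1) := by
    refine setLIntegral_congr_fun measurableSet_Ioc fun t ht => ?_
    rw [mul_assoc, ← ENNReal.rpow_add _ _ (hw t ht) ENNReal.ofReal_ne_top,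
      show -(1 / p ^ 2) + (1 / p ^ 2 - 1) = -1 by ring, ENNReal.rpow_neg_one, div_eq_mul_inv]
  have hfirst : ∫⁻ t in Ioc a r, (φ t * ENNReal.ofReal (1 - t) ^ (-(1 / p ^ 2))) ^ p =
      ∫⁻ t in Ioc a r, φ t ^ p * ENNReal.ofReal (1 - t) ^ (-(1 / p)) := by
    refine lintegral_congr fun t => ?_
    rw [ENNReal.mul_rpow_of_nonneg _ _ hp0.le, ← ENNReal.rpow_mul]
    congr 2
    field_simp
  have hsecond : ∫⁻ t in Ioc a r, (ENNReal.ofReal (1 - t) ^ (1 / p ^ 2 - 1)) ^ q ≤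
      ENNReal.ofReal p * ENNReal.ofReal (1 - r) ^ (-(1 / p)) := by
    have hexp : (1 / p ^ 2 - 1) * q = -(1 + 1 / p) := by
      simp only [q]
      field_simp [show p - 1 ≠ 0 by linarith]
      ring
    simp_rw [← ENNReal.rpow_mul, hexp]
    simpa using lintegral_Ioc_ofReal_one_sub_rpow_le (one_div_pos.2 hp0) a hr
  have hholder := ENNReal.lintegral_mul_le_Lp_mul_Lq _ hpq
    (hφ.mul (hwm (-(1 / p ^ 2))).aemeasurable) (hwm (1 / p ^ 2 - 1)).aemeasurable
  calc (∫⁻ t in Ioc a r, φ t / ENNReal.ofReal (1 - t)) ^ p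
      ≤ ((∫⁻ t in Ioc a r, φ t ^ p * ENNReal.ofReal (1 - t) ^ (-(1 / p))) ^ (1 / p) *
          (ENNReal.ofReal p * ENNReal.ofReal (1 - r) ^ (-(1 / p))) ^ (1 / q)) ^ p := by
        rw [hsplit, ← hfirst]
        refine ENNReal.rpow_le_rpow (hholder.trans ?_) hp0.le
        exact mul_le_mul_right (ENNReal.rpow_le_rpow hsecond (by positivity)) _
    _ = _ := by
        have hq : 1 / q * p = p - 1 := by
          simp only [q]
          field_simp
        rw [ENNReal.mul_rpow_of_nonneg _ _ hp0.le, ← ENNReal.rpow_mul, ← ENNReal.rpow_mul, hq,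
          one_div_mul_cancel hp0.ne', ENNReal.rpow_one,
          ENNReal.mul_rpow_of_nonneg _ _ (by linarith), ← ENNReal.rpow_mul,
          show -(1 / p) * (p - 1) = 1 / p - 1 by field_simp; ring]
        ring

/-- Hardy's inequality in its dual form, with the singularity at `1`. -/
theorem lintegral_rpow_lintegral_div_one_sub_le {p : ℝ} (hp : 1 ≤ p) {φ : ℝ → ℝ≥0∞} {a : ℝ}
    (hφ : AEMeasurable φ (volume.restrict (Ioo a 1))) :
    ∫⁻ r in Ioo a 1, (∫⁻ t in Ioc a r, φ t / ENNReal.ofReal (1 - t)) ^ p ≤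
      ENNReal.ofReal p ^ p * ∫⁻ t in Ioo a 1, φ t ^ p := by
  have hp0 : 0 < p := by linarith
  set C := ENNReal.ofReal p ^ (p - 1)
  have hC : C ≠ ⊤ := ENNReal.rpow_ne_top_of_nonneg (by linarith) ENNReal.ofReal_ne_top
  set ψ := fun t => φ t ^ p * ENNReal.ofReal (1 - t) ^ (-(1 / p))
  have hψ : AEMeasurable ψ (volume.restrict (Ioo a 1)) := by
    simp only [ψ]
    exact (hφ.pow_const p).mul (by fun_prop)
  have hcancel : ∀ t ∈ Ioo a 1, ψ t * (ENNReal.ofReal p * ENNReal.ofReal (1 - t) ^ (1 / p)) =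
      ENNReal.ofReal p * φ t ^ p := by
    intro t ht
    have hw : ENNReal.ofReal (1 - t) ≠ 0 := by simpa using ht.2
    rw [mul_left_comm, mul_assoc, ← ENNReal.rpow_add _ _ hw ENNReal.ofReal_ne_top,
      neg_add_cancel, ENNReal.rpow_zero, mul_one]
  calc ∫⁻ r in Ioo a 1, (∫⁻ t in Ioc a r, φ t / ENNReal.ofReal (1 - t)) ^ p
      ≤ ∫⁻ r in Ioo a 1, C * (ENNReal.ofReal (1 - r) ^ (1 / p - 1) * ∫⁻ t in Ioc a r, ψ t) := by
        refine setLIntegral_mono' measurableSet_Ioo fun r hr => ?_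
        rw [← mul_assoc]
        exact lintegral_div_one_sub_rpow_le hp
          (hφ.mono_measure (Measure.restrict_mono (Ioc_subset_Ioo_right hr.2) le_rfl)) hr.2
    _ = C * ∫⁻ t in Ioo a 1, ψ t * ∫⁻ r in Ico t 1, ENNReal.ofReal (1 - r) ^ (1 / p - 1) := by
        rw [lintegral_const_mul' _ _ hC, lintegral_Ioo_mul_lintegral_Ioc_eq hψ (by fun_prop)]
    _ ≤ C * ∫⁻ t in Ioo a 1, ψ t * (ENNReal.ofReal p * ENNReal.ofReal (1 - t) ^ (1 / p)) := by
        gcongr with t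
        simpa using lintegral_Ico_ofReal_one_sub_rpow_le (one_div_pos.2 hp0) t
    _ = ENNReal.ofReal p ^ p * ∫⁻ t in Ioo a 1, φ t ^ p := by
        rw [setLIntegral_congr_fun measurableSet_Ioo hcancel,
          lintegral_const_mul' _ _ ENNReal.ofReal_ne_top, ← mul_assoc]
        congr 1
        calc C * ENNReal.ofReal p = ENNReal.ofReal p ^ (p - 1) * ENNReal.ofReal p ^ (1 : ℝ) := by
              rw [ENNReal.rpow_one]
          _ = ENNReal.ofReal p ^ p := by
              rw [← ENNReal.rpow_add _ _ (by simpa using hp0) ENNReal.ofReal_ne_top, sub_add_cancel]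

theorem rpow_lintegral_Ioc_rpow_le_of_le_add {p : ℝ} (hp : 1 ≤ p) {H φ : ℝ → ℝ≥0∞}
    {a ρ : ℝ} {c e : ℝ≥0∞} (haρ : a ≤ ρ) (hφ : AEMeasurable φ (volume.restrict (Ioo a 1)))
    (hH : ∀ r ∈ Ioo ρ 1, H r ≤ c + e * ∫⁻ t in Ioc a r, φ t / ENNReal.ofReal (1 - t)) :
    (∫⁻ r in Ioc ρ 1, H r ^ p) ^ (1 / p) ≤
      c * ENNReal.ofReal (1 - ρ) ^ (1 / p) +
        e * (ENNReal.ofReal p * (∫⁻ t in Ioo a 1, φ t ^ p) ^ (1 / p)) := by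
  have hp0 : 0 < p := by linarith
  have hroot : ∀ x y : ℝ≥0∞, (x ^ p * y) ^ (1 / p) = x * y ^ (1 / p) := fun x y => by
    rw [ENNReal.mul_rpow_of_nonneg _ _ (by positivity), ← ENNReal.rpow_mul,
      mul_one_div_cancel hp0.ne', ENNReal.rpow_one]
  set G := fun r => ∫⁻ t in Ioc a r, φ t / ENNReal.ofReal (1 - t)
  have hG : Measurable G :=
    Monotone.measurable fun r r' h => lintegral_mono_set (Ioc_subset_Ioc_right h)
  have hGp : ∫⁻ r in Ioo ρ 1, G r ^ p ≤ ENNReal.ofReal p ^ p * ∫⁻ t in Ioo a 1, φ t ^ p :=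
    (lintegral_mono_set (Ioo_subset_Ioo_left haρ)).trans
      (lintegral_rpow_lintegral_div_one_sub_le hp hφ)
  calc (∫⁻ r in Ioc ρ 1, H r ^ p) ^ (1 / p)
      ≤ (∫⁻ r in Ioo ρ 1, (c + e * G r) ^ p) ^ (1 / p) := by
        rw [← setLIntegral_congr Ioo_ae_eq_Ioc]
        exact ENNReal.rpow_le_rpow (setLIntegral_mono' measurableSet_Ioo fun r hr =>
          ENNReal.rpow_le_rpow (hH r hr) hp0.le) (by positivity)
    _ ≤ (∫⁻ r in Ioo ρ 1, c ^ p) ^ (1 / p) + (∫⁻ r in Ioo ρ 1, (e * G r) ^ p) ^ (1 / p) :=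
        ENNReal.lintegral_Lp_add_le aemeasurable_const (hG.const_mul e).aemeasurable hp
    _ = c * ENNReal.ofReal (1 - ρ) ^ (1 / p) + e * (∫⁻ r in Ioo ρ 1, G r ^ p) ^ (1 / p) := by
        simp_rw [ENNReal.mul_rpow_of_nonneg _ _ hp0.le]
        rw [setLIntegral_const, Real.volume_Ioo, hroot, lintegral_const_mul _ (hG.pow_const p),
          hroot]
    _ ≤ _ := by
        gcongr
        calc (∫⁻ r in Ioo ρ 1, G r ^ p) ^ (1 / p)
            ≤ (ENNReal.ofReal p ^ p * ∫⁻ t in Ioo a 1, φ t ^ p) ^ (1 / p) := by gcongr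
          _ = _ := hroot _ _

theorem norm_circ (θ : ℝ) {r : ℝ} (hr : 0 ≤ r) : ‖circ r θ‖ = r := by
  rw [circ, norm_mul, Complex.norm_exp_ofReal_mul_I, Complex.norm_real, Real.norm_of_nonneg hr,
    mul_one]

theorem ofReal_mul_circ (t r θ : ℝ) : (t : ℂ) * circ r θ = circ (t * r) θ := by
  simp only [circ, Complex.ofReal_mul]
  ring

theorem continuous_circ (θ : ℝ) : Continuous fun r => circ r θ := by
  unfold circ; fun_prop

theorem norm_mul_intervalIntegral_circ_le (F : ℂ → ℂ) (θ : ℝ) {r : ℝ} (hr : 0 < r) :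
    ‖circ r θ * ∫ t in (0:ℝ)..1, F (t * circ r θ)‖ ≤ ∫ u in (0:ℝ)..r, ‖F (circ u θ)‖ := by
  have hsubst : ∫ t in (0:ℝ)..1, ‖F (t * circ r θ)‖ = r⁻¹ * ∫ u in (0:ℝ)..r, ‖F (circ u θ)‖ := by
    simp_rw [ofReal_mul_circ]
    simpa using intervalIntegral.integral_comp_mul_right (a := 0) (b := 1)
      (fun u => ‖F (circ u θ)‖) hr.ne'
  calc ‖circ r θ * ∫ t in (0:ℝ)..1, F (t * circ r θ)‖
      ≤ r * ∫ t in (0:ℝ)..1, ‖F (t * circ r θ)‖ := by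
        rw [norm_mul, norm_circ θ hr.le]
        exact mul_le_mul_of_nonneg_left
          (intervalIntegral.norm_integral_le_integral_norm zero_le_one) hr.le
    _ = ∫ u in (0:ℝ)..r, ‖F (circ u θ)‖ := by rw [hsubst, mul_inv_cancel_left₀ hr.ne']

theorem ofReal_norm_mul_intervalIntegral_circ_le {F f : ℂ → ℂ} (hF : ContinuousOn F (ball 0 1))
    {a C ε : ℝ} (ha : 0 ≤ a) (hε : 0 ≤ ε) (hC : ∀ z, ‖z‖ ≤ a → ‖F z‖ ≤ C)
    (hFf : ∀ z, a < ‖z‖ → ‖z‖ < 1 → (1 - ‖z‖) * ‖F z‖ ≤ ε * ‖f z‖) (θ : ℝ) {r : ℝ}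
    (har : a < r) (hr : r < 1) :
    ENNReal.ofReal ‖circ r θ * ∫ t in (0:ℝ)..1, F (t * circ r θ)‖ ≤
      ENNReal.ofReal (a * C) +
        ENNReal.ofReal ε *
          ∫⁻ t in Ioc a r, ENNReal.ofReal ‖f (circ t θ)‖ / ENNReal.ofReal (1 - t) := by
  have hr0 : 0 < r := ha.trans_lt har
  have hcont : ContinuousOn (fun u => ‖F (circ u θ)‖) (Icc 0 r) := by
    refine (hF.comp (continuous_circ θ).continuousOn fun u hu => ?_).norm
    rw [mem_ball_zero_iff, norm_circ θ hu.1]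
    exact hu.2.trans_lt hr
  have hlint : ENNReal.ofReal (∫ u in (0:ℝ)..r, ‖F (circ u θ)‖) =
      ∫⁻ u in Ioc 0 r, ENNReal.ofReal ‖F (circ u θ)‖ := by
    rw [intervalIntegral.integral_of_le hr0.le, ofReal_integral_eq_lintegral_ofReal
      ((hcont.integrableOn_Icc).mono_set Ioc_subset_Icc_self) (.of_forall fun _ => norm_nonneg _)]
  calc ENNReal.ofReal ‖circ r θ * ∫ t in (0:ℝ)..1, F (t * circ r θ)‖
      ≤ ∫⁻ u in Ioc 0 r, ENNReal.ofReal ‖F (circ u θ)‖ :=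
        hlint ▸ ENNReal.ofReal_le_ofReal (norm_mul_intervalIntegral_circ_le F θ hr0)
    _ = (∫⁻ u in Ioc 0 a, ENNReal.ofReal ‖F (circ u θ)‖) +
          ∫⁻ u in Ioc a r, ENNReal.ofReal ‖F (circ u θ)‖ := by
        rw [← Ioc_union_Ioc_eq_Ioc ha har.le, lintegral_union measurableSet_Ioc
          (Ioc_disjoint_Ioc_of_le le_rfl)]
    _ ≤ (∫⁻ u in Ioc 0 a, ENNReal.ofReal C) +
          ∫⁻ u in Ioc a r,
            ENNReal.ofReal ε * (ENNReal.ofReal ‖f (circ u θ)‖ / ENNReal.ofReal (1 - u)) := by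
        gcongr ?_ + ?_
        · refine setLIntegral_mono' measurableSet_Ioc fun u hu => ENNReal.ofReal_le_ofReal (hC _ ?_)
          rw [norm_circ θ hu.1.le]
          exact hu.2
        · refine setLIntegral_mono' measurableSet_Ioc fun u hu => ?_
          have hu0 : 0 ≤ u := ha.trans hu.1.le
          have hu1 : 0 < 1 - u := by linarith [hu.2]
          rw [← ENNReal.ofReal_div_of_pos hu1, ← ENNReal.ofReal_mul hε, ← mul_div_assoc]
          refine ENNReal.ofReal_le_ofReal ((le_div_iff₀' hu1).2 ?_)
          simpa only [norm_circ θ hu0] using hFf (circ u θ) (by rw [norm_circ θ hu0]; exact hu.1)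
            (by rw [norm_circ θ hu0]; linarith [hu.2])
    _ = _ := by
        rw [setLIntegral_const, Real.volume_Ioc, sub_zero,
          lintegral_const_mul' _ _ ENNReal.ofReal_ne_top, ENNReal.ofReal_mul ha, mul_comm]

theorem rpow_lintegral_Ioo_le_rhoInf {p : ℝ} (hp : 0 < p) (f : ℂ → ℂ) (θ : ℝ) {a : ℝ}
    (ha : 0 ≤ a) : (∫⁻ t in Ioo a 1, ENNReal.ofReal ‖f (circ t θ)‖ ^ p) ^ (1 / p) ≤ rhoInf p f := by
  refine le_trans ?_ (le_iSup _ θ)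
  gcongr ?_ ^ _
  simp_rw [ENNReal.ofReal_rpow_of_nonneg (norm_nonneg _) hp.le]
  exact lintegral_mono_set (Ioo_subset_Ioc_self.trans (Ioc_subset_Ioc_left ha))

namespace littleBloch

theorem exists_one_sub_norm_mul_le {g : ℂ → ℂ} (hg : littleBloch g) {ε : ℝ} (hε : 0 < ε) :
    ∃ a, 0 ≤ a ∧ a < 1 ∧ ∀ z : ℂ, a < ‖z‖ → ‖z‖ < 1 → (1 - ‖z‖) * ‖deriv g z‖ ≤ ε := by
  have := hg.eventually (eventually_le_nhds hε)
  obtain ⟨l, hl, hball⟩ := mem_nhdsLT_iff_exists_Ioo_subset.1 (eventually_comap.1 this)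
  refine ⟨max 0 l, le_max_left _ _, max_lt one_pos hl, fun z hz hz1 => ?_⟩
  have hz0 : 0 ≤ ‖z‖ := norm_nonneg z
  calc (1 - ‖z‖) * ‖deriv g z‖ ≤ (1 - ‖z‖ ^ 2) * ‖deriv g z‖ := by
        gcongr; nlinarith
    _ ≤ ε := hball ⟨(le_max_right _ _).trans_lt hz, hz1⟩ z rfl

end littleBloch

theorem rpow_lintegral_Ioc_norm_Tg_le {p : ℝ} (hp : 1 ≤ p) {f g : ℂ → ℂ}
    (hf : ContinuousOn f (ball 0 1)) (hF : ContinuousOn (fun w => f w * deriv g w) (ball 0 1))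
    {a C ε ρ : ℝ} (ha : 0 ≤ a) (hε : 0 ≤ ε) (haρ : a ≤ ρ)
    (hC : ∀ z, ‖z‖ ≤ a → ‖f z * deriv g z‖ ≤ C)
    (hg : ∀ z, a < ‖z‖ → ‖z‖ < 1 → (1 - ‖z‖) * ‖deriv g z‖ ≤ ε) (θ : ℝ) :
    (∫⁻ r in Ioc ρ 1, ENNReal.ofReal (‖Tg g f (circ r θ)‖ ^ p)) ^ (1 / p) ≤
      ENNReal.ofReal (a * C) * ENNReal.ofReal (1 - ρ) ^ (1 / p) +
        ENNReal.ofReal ε * (ENNReal.ofReal p * rhoInf p f) := by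
  have hp0 : 0 < p := by linarith
  have hFf : ∀ z : ℂ, a < ‖z‖ → ‖z‖ < 1 → (1 - ‖z‖) * ‖f z * deriv g z‖ ≤ ε * ‖f z‖ :=
    fun z hz hz1 => by
      rw [norm_mul, mul_left_comm, mul_comm ε]
      exact mul_le_mul_of_nonneg_left (hg z hz hz1) (norm_nonneg _)
  have hφ : AEMeasurable (fun t => ENNReal.ofReal ‖f (circ t θ)‖) (volume.restrict (Ioo a 1)) := by
    refine (ENNReal.continuous_ofReal.comp_continuousOn
      (hf.comp (continuous_circ θ).continuousOn fun t ht => ?_).norm).aemeasurable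
        measurableSet_Ioo
    rw [mem_ball_zero_iff, norm_circ θ (ha.trans ht.1.le)]
    exact ht.2
  calc (∫⁻ r in Ioc ρ 1, ENNReal.ofReal (‖Tg g f (circ r θ)‖ ^ p)) ^ (1 / p)
      = (∫⁻ r in Ioc ρ 1, ENNReal.ofReal ‖Tg g f (circ r θ)‖ ^ p) ^ (1 / p) := by
        simp_rw [ENNReal.ofReal_rpow_of_nonneg (norm_nonneg _) hp0.le]
    _ ≤ ENNReal.ofReal (a * C) * ENNReal.ofReal (1 - ρ) ^ (1 / p) + ENNReal.ofReal ε *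
          (ENNReal.ofReal p * (∫⁻ t in Ioo a 1, ENNReal.ofReal ‖f (circ t θ)‖ ^ p) ^ (1 / p)) :=
        rpow_lintegral_Ioc_rpow_le_of_le_add hp haρ hφ fun r hr =>
          ofReal_norm_mul_intervalIntegral_circ_le hF ha hε hC hFf θ (haρ.trans_lt hr.1) hr.2
    _ ≤ _ := by
        gcongr
        exact rpow_lintegral_Ioo_le_rhoInf hp0 f θ ha

/-- Let `1 ≤ p < ∞` and `g` in the little Bloch space (analytic on the
disc). Then for every analytic `f` with `ρ_{p,∞}(f) < ∞` one has `T_g f ∈ RM(p,0)`. -/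
theorem stmt12 (p : ℝ) (hp : 1 ≤ p)
    (g : ℂ → ℂ) (hg : DifferentiableOn ℂ g (ball (0:ℂ) 1)) (hg0 : littleBloch g) :
    ∀ f : ℂ → ℂ, DifferentiableOn ℂ f (ball (0:ℂ) 1) → rhoInf p f ≠ ⊤ →
      memRMp0 p (Tg g f) := by
  intro f hf hM
  have hF : DifferentiableOn ℂ (fun w => f w * deriv g w) (ball 0 1) :=
    hf.mul (hg.deriv isOpen_ball)
  refine ⟨differentiableOn_mul_intervalIntegral_comp_ofReal_mul hF, ?_⟩
  refine ENNReal.tendsto_nhds_zero_of_forall_le_mul_add (K := ENNReal.ofReal p * rhoInf p f)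
    (tendsto_ofReal_one_sub_rpow_nhdsLT (s := 1 / p) (by positivity))
    (ENNReal.mul_ne_top ENNReal.ofReal_ne_top hM) fun ε hε => ?_
  obtain ⟨a, ha0, ha1, hbloch⟩ := hg0.exists_one_sub_norm_mul_le hε
  obtain ⟨C, hC⟩ := (isCompact_closedBall (0:ℂ) a).exists_bound_of_continuousOn
    (hF.continuousOn.mono (closedBall_subset_ball ha1))
  refine ⟨ENNReal.ofReal (a * C), ENNReal.ofReal_ne_top, ?_⟩
  filter_upwards [Ioo_mem_nhdsLT ha1] with ρ hρ
  exact iSup_le fun θ => rpow_lintegral_Ioc_norm_Tg_le hp hf.continuousOn hF.continuousOn ha0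
    hε.le hρ.1.le (fun z hz => hC z (mem_closedBall_zero_iff.2 hz)) hbloch θ
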